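/- Let 𝔤 be a Lie algebra over ℂ with elements ξ, E₁, E₂, E₃ and scalars α ≠ 0, β₁₂ ≠ 0, β₂₃ ∈ ℂ such that [ξ,E₁] = -αE₁, [ξ,E₂] = αE₂, [ξ,E₃] = -αE₃, [E₁,E₂] = β₁₂ξ, [E₂,E₃] = β₂₃ξ, and [E₃,E₁] = 0, with E₁, E₃ linearly independent. Then no such Lie algebra exists (the hypotheses are contradictory). -/
import Mathlib

/-- Case 2 of Theorem 3.2: no complex Lie algebra contains elements
`ξ, E₁, E₂, E₃` with `[ξ,E₁] = -α•E₁`, `[ξ,E₂] = α•E₂`, `[ξ,E₃] = -α•E₃`,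
`[E₁,E₂] = β₁₂•ξ`, `[E₂,E₃] = β₂₃•ξ`, `[E₃,E₁] = 0`, where `α ≠ 0`,
`β₁₂ ≠ 0` and `E₁, E₃` are linearly independent. -/
theorem stmt_5 (L : Type*) [LieRing L] [LieAlgebra ℂ L]
    (ξ E₁ E₂ E₃ : L) (α β₁₂ β₂₃ : ℂ)
    (hα : α ≠ 0) (hβ₁₂ : β₁₂ ≠ 0)
    (h1 : ⁅ξ, E₁⁆ = (-α) • E₁) (h2 : ⁅ξ, E₂⁆ = α • E₂) (h3 : ⁅ξ, E₃⁆ = (-α) • E₃)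
    (h12 : ⁅E₁, E₂⁆ = β₁₂ • ξ) (h23 : ⁅E₂, E₃⁆ = β₂₃ • ξ) (h31 : ⁅E₃, E₁⁆ = 0)
    (hind : LinearIndependent ℂ ![E₁, E₃]) :
    False := by
  have h13 : ⁅E₁, E₃⁆ = 0 := by rw [← lie_skew, h31, neg_zero]
  have hE1ξ : ⁅E₁, ξ⁆ = α • E₁ := by rw [← lie_skew, h1]; simp
  have hJ := leibniz_lie E₁ E₂ E₃
  rw [h23, h12, h13, lie_zero, add_zero, lie_smul, smul_lie, hE1ξ, h3] at hJ
  have key : (β₂₃ * α) • E₁ + (β₁₂ * α) • E₃ = 0 := by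
    rw [mul_smul, mul_smul, hJ]
    simp [smul_smul]
  obtain ⟨h, h'⟩ := LinearIndependent.pair_iff.mp hind _ _ key
  exact hα (by simpa [hβ₁₂] using mul_eq_zero.mp h')
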